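/- arXiv:2211.12467 — 2 statements merged into one kernel-verified Lean document; each statement's English description precedes it below -/
import Mathlib

section
/- Let n be a positive integer. If P⁺(n)² does not divide n, then t_n ≥ P⁺(n). -/
/-!
The bound holds for every prime `p` dividing `n` exactly once, in particular for
`p = P⁺(n)`. None of `n + 1, …, n + t` is divisible by `p` when `t < p`, since `p ∣ n`;
so if `n * ∏ m` were a square `r ^ 2`, then `p ∣ r`, and `p ^ 2 ∣ r ^ 2` would force
`p ^ 2 ∣ n`.
-/

/-- `tn n` is the least nonnegative integer `t` such that there is a (possibly empty)
subset `S` of `{n+1, ..., n+t}` with `n * ∏_{m ∈ S} m` a perfect square. -/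
noncomputable def tn (n : ℕ) : ℕ :=
  sInf {t : ℕ | ∃ S ⊆ Finset.Icc (n + 1) (n + t), IsSquare (n * ∏ m ∈ S, m)}

/-- `Pplus n` is the largest prime factor of `n`, with `Pplus 1 = 1`. -/
def Pplus (n : ℕ) : ℕ := WithBot.unbotD 1 n.primeFactors.max

theorem Pplus_mem_primeFactors_of_ne_one {n : ℕ} (h : Pplus n ≠ 1) :
    Pplus n ∈ n.primeFactors := by
  unfold Pplus at *
  cases hmax : n.primeFactors.max with
  | bot => simp [hmax] at h
  | coe a => exact Finset.mem_of_max hmax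

theorem tn_spec (n : ℕ) :
    ∃ S ⊆ Finset.Icc (n + 1) (n + tn n), IsSquare (n * ∏ m ∈ S, m) := by
  refine Nat.sInf_mem (s := {t | ∃ S ⊆ Finset.Icc (n + 1) (n + t), _}) ?_
  rcases eq_or_ne n 0 with rfl | hn
  · exact ⟨0, ∅, by simp, by simp⟩
  · exact ⟨3 * n, {4 * n}, by simp; omega, 2 * n, by simp; ring⟩

theorem Nat.Prime.not_dvd_prod_of_subset_Icc {p n t : ℕ} {S : Finset ℕ} (hp : p.Prime)
    (hpn : p ∣ n) (ht : t < p) (hS : S ⊆ Finset.Icc (n + 1) (n + t)) :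
    ¬ p ∣ ∏ m ∈ S, m := by
  rw [Prime.dvd_finsetProd_iff hp.prime]
  rintro ⟨m, hm, hpm⟩
  obtain ⟨hnm, hmt⟩ := Finset.mem_Icc.mp (hS hm)
  exact Nat.not_dvd_of_pos_of_lt (by omega) (by omega) (Nat.dvd_sub hpm hpn)

theorem Nat.Prime.sq_dvd_of_isSquare_mul {p n a : ℕ} (hp : p.Prime) (hpn : p ∣ n)
    (hpa : ¬ p ∣ a) (hsq : IsSquare (n * a)) : p ^ 2 ∣ n := by
  obtain ⟨r, hr⟩ := hsq
  rw [← sq] at hr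
  have hpr : p ∣ r := hp.dvd_of_dvd_pow (hr ▸ dvd_mul_of_dvd_left hpn a)
  have hcop : Nat.Coprime (p ^ 2) a := (hp.coprime_iff_not_dvd.mpr hpa).pow_left 2
  exact hcop.dvd_of_dvd_mul_right (hr ▸ pow_dvd_pow_of_dvd hpr 2)

theorem le_tn_of_prime_dvd {p n : ℕ} (hp : p.Prime) (hpn : p ∣ n) (hsq : ¬ p ^ 2 ∣ n) :
    p ≤ tn n := by
  by_contra! ht
  obtain ⟨S, hS, hsquare⟩ := tn_spec n
  exact hsq (hp.sq_dvd_of_isSquare_mul hpn (hp.not_dvd_prod_of_subset_Icc hpn ht hS) hsquare)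

theorem stmt_4_general (n : ℕ) (h : ¬ (Pplus n) ^ 2 ∣ n) :
    Pplus n ≤ tn n := by
  have hmem : Pplus n ∈ n.primeFactors :=
    Pplus_mem_primeFactors_of_ne_one fun h1 => h (by simp [h1])
  exact le_tn_of_prime_dvd (Nat.prime_of_mem_primeFactors hmem) (Nat.dvd_of_mem_primeFactors hmem) h

theorem stmt_4 (n : ℕ) (hn : 0 < n) (h : ¬ (Pplus n) ^ 2 ∣ n) :
    Pplus n ≤ tn n :=
  stmt_4_general n h
end

section
/- There exist a constant C > 0 and x₀ such that for all real x ≥ x₀, the number of positive integers n ≤ x with P⁺(n)² dividing n is at most C·x·exp(−√(log x)). -/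
/-!
Put `t = √(log x)`, `y = eᵗ` and split the `n ≤ x` with `P⁺(n)² ∣ n` according to whether
`P⁺(n) ≤ y`. If `P⁺(n) > y`, then `n` is divisible by the square of some `m > y`, and there are
at most `∑_{m > y} x / m² ≤ 2x / y` such `n`. The `y`-smooth `n ≤ x` are counted by Rankin's
trick: there are at most `x^σ ∏_{p ≤ y} (1 - p^{-σ})⁻¹ ≤ x^σ exp (4 ∑_{p ≤ y} p^{-σ})` of them.
For `σ = 1 - 2/t` and `p ≤ y` one has `p^{-σ} ≤ e² / p`, and Chebyshev's bound `θ(z) ≤ z log 4`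
on dyadic blocks gives `∑_{p ≤ y} 1/p = O(log log y) = O(log t)`; since `x^σ = x e^{-2t}`, the
smooth count is `x e^{-2t + O(log t)} ≤ x e^{-t}`.
-/

open Finset Real Chebyshev

lemma Pplus_eq_max' {n : ℕ} (h : n.primeFactors.Nonempty) :
    Pplus n = n.primeFactors.max' h := by
  rw [Pplus, ← coe_max' h]
  rfl

lemma le_Pplus {n p : ℕ} (hp : p ∈ n.primeFactors) : p ≤ Pplus n :=
  Pplus_eq_max' ⟨p, hp⟩ ▸ n.primeFactors.le_max' p hp

lemma mem_smoothNumbers_of_Pplus_lt {n N : ℕ} (hn : n ≠ 0) (h : Pplus n < N) :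
    n ∈ N.smoothNumbers :=
  Nat.mem_smoothNumbers'.mpr fun _ hp hpn ↦
    (le_Pplus (Nat.mem_primeFactors.mpr ⟨hp, hpn, hn⟩)).trans_lt h

lemma sum_one_div_prime_le_of_two_pow_le {s : Finset ℕ} {k : ℕ} (hk : 0 < k)
    (hs : ∀ p ∈ s, p.Prime ∧ 2 ^ k ≤ p ∧ p ≤ 2 ^ (k + 1)) :
    ∑ p ∈ s, (1 : ℝ) / p ≤ 4 / k := by
  have hlog2 : 0 < log 2 := log_pos one_lt_two
  have hcard : (#s : ℝ) * (k * log 2) ≤ 2 ^ (k + 2) * log 2 :=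
    calc (#s : ℝ) * (k * log 2) ≤ ∑ p ∈ s, log p := by
          rw [← nsmul_eq_mul]
          refine card_nsmul_le_sum _ _ _ fun p hp ↦ ?_
          rw [← log_pow]
          exact log_le_log (by positivity) (by exact_mod_cast (hs p hp).2.1)
      _ ≤ ∑ p ∈ Nat.primesLE (2 ^ (k + 1)), log p := by
          refine sum_le_sum_of_subset_of_nonneg (fun p hp ↦ ?_) fun p _ _ ↦ log_natCast_nonneg p
          exact Nat.mem_primesLE.mpr ⟨(hs p hp).2.2, (hs p hp).1⟩
      _ = θ (2 ^ (k + 1) : ℕ) := (theta_eq_sum_primesLE_log _).symm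
      _ ≤ log 4 * (2 ^ (k + 1) : ℕ) := theta_le_log4_mul_x (Nat.cast_nonneg _)
      _ = 2 ^ (k + 2) * log 2 := by
          rw [show (4 : ℝ) = 2 ^ 2 by norm_num, log_pow]
          push_cast
          ring
  calc ∑ p ∈ s, (1 : ℝ) / p ≤ #s • (1 / 2 ^ k : ℝ) := by
        refine sum_le_card_nsmul _ _ _ fun p hp ↦ ?_
        gcongr
        exact_mod_cast (hs p hp).2.1
    _ = (#s * k) / (2 ^ k * k) := by rw [nsmul_eq_mul]; field_simp
    _ ≤ 2 ^ (k + 2) / (2 ^ k * k) := by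
        gcongr
        rw [← mul_assoc] at hcard
        exact le_of_mul_le_mul_right hcard hlog2
    _ = 4 / k := by
        rw [pow_add]
        field_simp
        norm_num

lemma sum_primesLE_one_div_le (M : ℕ) (hM : 2 ≤ M) :
    ∑ p ∈ Nat.primesLE M, (1 : ℝ) / p ≤ 8 + 4 * log (log M) := by
  set L := Nat.log 2 M
  have hL : 0 < L := Nat.log_pos one_lt_two hM
  have hmaps : ∀ p ∈ Nat.primesLE M, Nat.log 2 p ∈ Icc 1 L := fun p hp ↦
    mem_Icc.mpr ⟨Nat.log_pos one_lt_two (Nat.two_le_of_mem_primesLE hp),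
      Nat.log_mono_right (Nat.le_of_mem_primesLE hp)⟩
  have hblocks : ∑ p ∈ Nat.primesLE M, (1 : ℝ) / p ≤ 4 * harmonic L := by
    rw [← sum_fiberwise_of_maps_to hmaps, harmonic_eq_sum_Icc]
    push_cast
    rw [mul_sum]
    refine sum_le_sum fun k hk ↦ ?_
    have hk : 0 < k := (mem_Icc.mp hk).1
    refine (sum_one_div_prime_le_of_two_pow_le hk fun p hp ↦ ?_).trans_eq (div_eq_mul_inv _ _)
    obtain ⟨hpM, rfl⟩ := mem_filter.mp hp
    have hpp := Nat.prime_of_mem_primesLE hpM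
    exact ⟨hpp, Nat.pow_log_le_self 2 hpp.ne_zero,
      (Nat.lt_pow_succ_log_self one_lt_two p).le⟩
  have hlogM : 0 < log M := log_pos (by exact_mod_cast hM)
  have hL_le : (L : ℝ) ≤ 2 * log M := by
    have h2L : L * log 2 ≤ log M := by
      rw [← log_pow]
      exact log_le_log (by positivity) (by exact_mod_cast Nat.pow_log_le_self 2 (by omega))
    nlinarith [log_two_gt_d9]
  have hlogL : log L ≤ log 2 + log (log M) := by
    rw [← log_mul two_ne_zero hlogM.ne']
    exact log_le_log (by exact_mod_cast hL) hL_le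
  have hharm : ((harmonic L : ℚ) : ℝ) ≤ 1 + log L := by
    exact_mod_cast harmonic_le_one_add_log L
  linarith [log_two_lt_d9]

@[simps]
noncomputable def natCastRpowHom (s : ℝ) : ℕ →* ℝ where
  toFun n := (n : ℝ) ^ s
  map_one' := by simp
  map_mul' m n := by push_cast; exact mul_rpow m.cast_nonneg n.cast_nonneg

theorem sum_rpow_neg_le_prod_primesBelow {s : Finset ℕ} {N : ℕ} {σ : ℝ} (hσ : 0 < σ)
    (hs : ∀ n ∈ s, n ∈ N.smoothNumbers) :
    ∑ n ∈ s, (n : ℝ) ^ (-σ) ≤ ∏ p ∈ N.primesBelow, (1 - (p : ℝ) ^ (-σ))⁻¹ := by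
  have hp : ∀ {p : ℕ}, p.Prime → ‖natCastRpowHom (-σ) p‖ < 1 := fun {p} hp ↦ by
    rw [natCastRpowHom_apply, Real.norm_of_nonneg (by positivity)]
    exact rpow_lt_one_of_one_lt_of_neg (by exact_mod_cast hp.one_lt) (neg_neg_of_pos hσ)
  have hsum := (EulerProduct.summable_and_hasSum_smoothNumbers_prod_primesBelow_geometric hp N).2
  rw [← Function.comp_def, hasSum_subtype_iff_indicator] at hsum
  calc ∑ n ∈ s, (n : ℝ) ^ (-σ)
      = ∑ n ∈ s, (N.smoothNumbers.indicator (natCastRpowHom (-σ)) n) :=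
        sum_congr rfl fun n hn ↦ (Set.indicator_of_mem (hs n hn) (natCastRpowHom (-σ))).symm
    _ ≤ _ := by
        refine sum_le_hasSum s (fun n _ ↦ Set.indicator_nonneg (fun m _ ↦ ?_) n) hsum
        rw [natCastRpowHom_apply]
        positivity

theorem card_le_rpow_mul_prod_primesBelow {s : Finset ℕ} {N : ℕ} {x σ : ℝ} (hx : 0 ≤ x)
    (hσ : 0 < σ) (hs : ∀ n ∈ s, n ∈ N.smoothNumbers ∧ (n : ℝ) ≤ x) :
    (#s : ℝ) ≤ x ^ σ * ∏ p ∈ N.primesBelow, (1 - (p : ℝ) ^ (-σ))⁻¹ := by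
  calc (#s : ℝ) = ∑ n ∈ s, 1 := by simp
    _ ≤ ∑ n ∈ s, x ^ σ * (n : ℝ) ^ (-σ) := by
        refine sum_le_sum fun n hn ↦ ?_
        have hn0 : (0 : ℝ) < n := by
          exact_mod_cast Nat.pos_of_ne_zero (Nat.ne_zero_of_mem_smoothNumbers (hs n hn).1)
        rw [rpow_neg hn0.le, ← div_eq_mul_inv, ← div_rpow hx hn0.le]
        exact one_le_rpow ((one_le_div hn0).mpr (hs n hn).2) hσ.le
    _ ≤ x ^ σ * ∏ p ∈ N.primesBelow, (1 - (p : ℝ) ^ (-σ))⁻¹ := by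
        rw [← mul_sum]
        gcongr
        exact sum_rpow_neg_le_prod_primesBelow hσ fun n hn ↦ (hs n hn).1

theorem card_le_of_forall_exists_sq_dvd {s : Finset ℕ} {N Y : ℕ}
    (hs : ∀ n ∈ s, n ∈ Ioc 0 N ∧ ∃ m, Y < m ∧ m ^ 2 ∣ n) :
    (#s : ℝ) ≤ 2 * N / (Y + 1) := by
  have hcover : s ⊆ (Ioo Y (N + 1)).biUnion fun m ↦ {n ∈ Ioc 0 N | m ^ 2 ∣ n} := by
    intro n hn
    obtain ⟨hnN, m, hYm, hmn⟩ := hs n hn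
    have hm : m ≤ N := (Nat.le_self_pow two_ne_zero m).trans
      ((Nat.le_of_dvd (mem_Ioc.mp hnN).1 hmn).trans (mem_Ioc.mp hnN).2)
    exact mem_biUnion.mpr ⟨m, mem_Ioo.mpr ⟨hYm, Nat.lt_succ_of_le hm⟩, mem_filter.mpr ⟨hnN, hmn⟩⟩
  calc (#s : ℝ) ≤ ∑ m ∈ Ioo Y (N + 1), ((N / m ^ 2 : ℕ) : ℝ) := by
        rw [← Nat.cast_sum]
        simp_rw [← Nat.Ioc_filter_dvd_card_eq_div]
        exact_mod_cast (card_le_card hcover).trans card_biUnion_le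
    _ ≤ ∑ m ∈ Ioo Y (N + 1), (N : ℝ) * ((m : ℝ) ^ 2)⁻¹ := by
        refine sum_le_sum fun m _ ↦ ?_
        rw [← div_eq_mul_inv]
        exact_mod_cast Nat.cast_div_le
    _ ≤ N * (2 / (Y + 1)) := by
        rw [← mul_sum]
        gcongr
        exact sum_Ioo_inv_sq_le Y (N + 1)
    _ = 2 * N / (Y + 1) := by ring

theorem ncard_Pplus_sq_dvd_le {x σ : ℝ} (hx : 0 ≤ x) (hσ : 0 < σ) (Y : ℕ) :
    ({n : ℕ | 0 < n ∧ (n : ℝ) ≤ x ∧ Pplus n ^ 2 ∣ n}.ncard : ℝ)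
      ≤ x ^ σ * ∏ p ∈ Nat.primesLE Y, (1 - (p : ℝ) ^ (-σ))⁻¹ + 2 * x / (Y + 1) := by
  set s := {n ∈ Icc 1 ⌊x⌋₊ | Pplus n ^ 2 ∣ n}
  have hs : {n : ℕ | 0 < n ∧ (n : ℝ) ≤ x ∧ Pplus n ^ 2 ∣ n} = s := by
    ext n
    simp [s, Nat.le_floor_iff hx, Nat.one_le_iff_ne_zero, Nat.pos_iff_ne_zero, and_assoc]
  have hmem : ∀ n ∈ s, n ∈ Icc 1 ⌊x⌋₊ ∧ Pplus n ^ 2 ∣ n := fun n hn ↦ by simpa [s] using hn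
  rw [hs, Set.ncard_coe_finset, ← card_filter_add_card_filter_not (· ∈ (Y + 1).smoothNumbers)]
  push_cast
  gcongr
  · refine card_le_rpow_mul_prod_primesBelow hx hσ fun n hn ↦ ?_
    obtain ⟨hns, hsmooth⟩ := mem_filter.mp hn
    exact ⟨hsmooth, (Nat.le_floor_iff hx).mp (mem_Icc.mp (hmem n hns).1).2⟩
  · refine (card_le_of_forall_exists_sq_dvd (N := ⌊x⌋₊) (Y := Y) fun n hn ↦ ?_).trans ?_
    · obtain ⟨hns, hrough⟩ := mem_filter.mp hn
      obtain ⟨hnN, hsq⟩ := hmem n hns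
      have hn0 : n ≠ 0 := by have := (mem_Icc.mp hnN).1; omega
      refine ⟨mem_Ioc.mpr ⟨by omega, (mem_Icc.mp hnN).2⟩, Pplus n, ?_, hsq⟩
      by_contra hle
      exact hrough (mem_smoothNumbers_of_Pplus_lt hn0 (by omega))
    · gcongr
      exact Nat.floor_le hx

lemma inv_one_sub_le_exp {a : ℝ} (ha₀ : 0 ≤ a) (ha₁ : a ≤ 3 / 4) : (1 - a)⁻¹ ≤ exp (4 * a) := by
  calc (1 - a)⁻¹ ≤ 1 + 4 * a := by
        rw [inv_le_iff_one_le_mul₀ (by linarith)]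
        nlinarith
    _ ≤ exp (4 * a) := by linarith [add_one_le_exp (4 * a)]

lemma prod_inv_one_sub_le_exp_sum {ι : Type*} (s : Finset ι) {a : ι → ℝ}
    (ha₀ : ∀ i ∈ s, 0 ≤ a i) (ha₁ : ∀ i ∈ s, a i ≤ 3 / 4) :
    ∏ i ∈ s, (1 - a i)⁻¹ ≤ exp (4 * ∑ i ∈ s, a i) := by
  rw [mul_sum, exp_sum]
  exact prod_le_prod (fun i hi ↦ inv_nonneg.mpr (by linarith [ha₁ i hi]))
    fun i hi ↦ inv_one_sub_le_exp (ha₀ i hi) (ha₁ i hi)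

lemma rpow_neg_le_three_quarters {p σ : ℝ} (hp : 2 ≤ p) (hσ : 1 / 2 ≤ σ) :
    p ^ (-σ) ≤ 3 / 4 := by
  calc p ^ (-σ) ≤ p ^ (-(1 / 2) : ℝ) :=
        rpow_le_rpow_of_exponent_le (by linarith) (neg_le_neg hσ)
    _ ≤ 2 ^ (-(1 / 2) : ℝ) := rpow_le_rpow_of_nonpos two_pos hp (by norm_num)
    _ ≤ 3 / 4 := by
        rw [rpow_neg zero_le_two, ← sqrt_eq_rpow, inv_le_comm₀ (by positivity) (by norm_num),
          le_sqrt (by norm_num) zero_le_two]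
        norm_num

lemma rpow_div_sub_one_le {p t c : ℝ} (hp : 0 < p) (ht : 0 < t) (hc : 0 ≤ c) (hpt : p ≤ exp t) :
    p ^ (c / t - 1) ≤ exp c / p := by
  calc p ^ (c / t - 1) = p ^ (c / t) / p := by rw [rpow_sub hp, rpow_one]
    _ ≤ exp t ^ (c / t) / p := by gcongr
    _ = exp c / p := by rw [← exp_mul, mul_div_cancel₀ _ ht.ne']

lemma add_mul_log_le_self {t : ℝ} (ht : 10 ^ 6 ≤ t) : 256 + 128 * log t ≤ t := by
  have hsqrt : 1000 ≤ √t := le_sqrt_of_sq_le (by linarith)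
  have hlog : log t ≤ 2 * √t := by
    simpa [sqrt_eq_rpow, div_eq_mul_inv, mul_comm] using
      log_le_rpow_div (by linarith : (0 : ℝ) ≤ t) (by norm_num : (0 : ℝ) < 1 / 2)
  nlinarith [mul_self_sqrt (by linarith : (0 : ℝ) ≤ t)]

theorem exp_sq_rpow_mul_prod_primesLE_le {t : ℝ} (ht : 10 ^ 6 ≤ t) :
    exp (t ^ 2) ^ (1 - 2 / t) * ∏ p ∈ Nat.primesLE ⌊exp t⌋₊, (1 - (p : ℝ) ^ (-(1 - 2 / t)))⁻¹
      ≤ exp (t ^ 2 - t) := by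
  set σ := 1 - 2 / t
  set Y := ⌊exp t⌋₊
  have ht0 : 0 < t := by linarith
  have hσ : 1 / 2 ≤ σ := by
    have : 2 / t ≤ 1 / 2 := by rw [div_le_div_iff₀ ht0 two_pos]; linarith
    linarith
  have hY : 2 ≤ Y := Nat.le_floor (by push_cast; linarith [add_one_le_exp t])
  have hYt : (Y : ℝ) ≤ exp t := Nat.floor_le (exp_pos t).le
  have hloglog : log (log Y) ≤ log t := by
    refine log_le_log (log_pos (by exact_mod_cast hY)) ?_
    exact (log_le_log (by positivity) hYt).trans_eq (log_exp t)
  have hexp2 : exp 2 ≤ 8 := by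
    rw [show (2 : ℝ) = 1 + 1 by norm_num, exp_add]
    nlinarith [exp_one_lt_d9, exp_pos 1]
  have hterm : ∀ p ∈ Nat.primesLE Y, (p : ℝ) ^ (-σ) ≤ 8 * (1 / p) := fun p hp ↦ by
    have hp0 : (0 : ℝ) < p := by exact_mod_cast (Nat.prime_of_mem_primesLE hp).pos
    have hpY : (p : ℝ) ≤ exp t := (Nat.cast_le.mpr (Nat.le_of_mem_primesLE hp)).trans hYt
    calc (p : ℝ) ^ (-σ) = p ^ (2 / t - 1) := by rw [neg_sub]
      _ ≤ exp 2 / p := rpow_div_sub_one_le hp0 ht0 zero_le_two hpY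
      _ ≤ 8 * (1 / p) := by rw [mul_one_div]; gcongr
  have hsum : ∑ p ∈ Nat.primesLE Y, (p : ℝ) ^ (-σ) ≤ 8 * (8 + 4 * log t) :=
    calc ∑ p ∈ Nat.primesLE Y, (p : ℝ) ^ (-σ) ≤ 8 * ∑ p ∈ Nat.primesLE Y, (1 : ℝ) / p := by
          rw [mul_sum]
          exact sum_le_sum hterm
      _ ≤ 8 * (8 + 4 * log t) := by linarith [sum_primesLE_one_div_le Y hY]
  have hprod := prod_inv_one_sub_le_exp_sum (Nat.primesLE Y) (a := fun p ↦ (p : ℝ) ^ (-σ))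
    (fun p _ ↦ by positivity)
    (fun p hp ↦ rpow_neg_le_three_quarters (by exact_mod_cast Nat.two_le_of_mem_primesLE hp) hσ)
  calc exp (t ^ 2) ^ σ * ∏ p ∈ Nat.primesLE Y, (1 - (p : ℝ) ^ (-σ))⁻¹
      ≤ exp (t ^ 2 * σ) * exp (4 * (8 * (8 + 4 * log t))) := by
        rw [← exp_mul]
        gcongr
        exact hprod.trans (exp_le_exp.mpr (by linarith))
    _ = exp (t ^ 2 - 2 * t + (256 + 128 * log t)) := by
        rw [← exp_add, show t ^ 2 * σ = t ^ 2 - 2 * t by simp only [σ]; field_simp]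
        ring_nf
    _ ≤ exp (t ^ 2 - t) := exp_le_exp.mpr (by linarith [add_mul_log_le_self ht])

theorem stmt_5 :
    ∃ C > (0 : ℝ), ∃ x₀ : ℝ, ∀ x : ℝ, x₀ ≤ x →
      (({n : ℕ | 0 < n ∧ (n : ℝ) ≤ x ∧ (Pplus n) ^ 2 ∣ n}.ncard : ℝ))
        ≤ C * x * Real.exp (-Real.sqrt (Real.log x)) := by
  refine ⟨3, by norm_num, exp (10 ^ 12), fun x hx ↦ ?_⟩
  have hx0 : 0 < x := (exp_pos _).trans_le hx
  set t := √(log x)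
  have hlogx : 10 ^ 12 ≤ log x := (le_log_iff_exp_le hx0).mpr hx
  have ht : 10 ^ 6 ≤ t := le_sqrt_of_sq_le (by linarith)
  have hxt : x = exp (t ^ 2) := by rw [sq_sqrt (by linarith), exp_log hx0]
  have hσ : 0 < 1 - 2 / t := by
    have : 2 / t < 1 := (div_lt_one (by positivity)).mpr (by linarith)
    linarith
  have hY : exp t < ⌊exp t⌋₊ + 1 := Nat.lt_floor_add_one _
  calc _ ≤ x ^ (1 - 2 / t) * ∏ p ∈ Nat.primesLE ⌊exp t⌋₊, (1 - (p : ℝ) ^ (-(1 - 2 / t)))⁻¹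
        + 2 * x / (⌊exp t⌋₊ + 1) := ncard_Pplus_sq_dvd_le hx0.le hσ _
    _ ≤ exp (t ^ 2 - t) + 2 * x / exp t := by
        gcongr
        exact hxt ▸ exp_sq_rpow_mul_prod_primesLE_le ht
    _ = 3 * x * exp (-t) := by rw [hxt, exp_sub, exp_neg]; ring
end
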